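/- arXiv:math/0607662 — 11 statements merged into one kernel-verified Lean document; each statement's English description precedes it below -/
import Mathlib

section
/- For all g ∈ G₁ and a, b ∈ G₂ one has (g^b)ᵃ · α(a^{(g^b)}, bᵍ) = α(a,b) · g^{m(a,b)} and (m(a,b))ᵍ = m(a^{(g^b)}, bᵍ). -/
/-- In a quasi-double group decomposition `G = G₁ · G₂`,
for all `g ∈ G₁` and `a b ∈ G₂`:
`(g^b)ᵃ · α(a^(g^b), bᵍ) = α(a,b) · g^(m(a,b))` and
`(m(a,b))ᵍ = m(a^(g^b), bᵍ)`. -/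
theorem stmt_1 {G : Type*} [Group G] (G₁ : Subgroup G) (G₂ : Set G)
    (h1 : (1 : G) ∈ G₂)
    (hω : Function.Bijective (fun p : G₁ × G₂ => (p.1 : G) * (p.2 : G)))
    (α : G₂ → G₂ → G₁) (m : G₂ → G₂ → G₂)
    (hαm : ∀ a b : G₂, (a : G) * (b : G) = (α a b : G) * (m a b : G))
    (χ : G₂ → G₁ → G₁) (σ : G₂ → G₁ → G₂)
    (hχσ : ∀ (a : G₂) (g : G₁), (a : G) * (g : G) = (χ a g : G) * (σ a g : G)) :
    ∀ (g : G₁) (a b : G₂),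
      χ a (χ b g) * α (σ a (χ b g)) (σ b g) = α a b * χ (m a b) g ∧
      σ (m a b) g = m (σ a (χ b g)) (σ b g) := by
  intro g a b
  have key : ((χ a (χ b g) * α (σ a (χ b g)) (σ b g) : G₁) : G)
      * (m (σ a (χ b g)) (σ b g) : G)
      = ((α a b * χ (m a b) g : G₁) : G) * (σ (m a b) g : G) := by
    push_cast
    calc (χ a (χ b g) : G) * (α (σ a (χ b g)) (σ b g) : G) * (m (σ a (χ b g)) (σ b g) : G)
        = (χ a (χ b g) : G) * ((σ a (χ b g) : G) * (σ b g : G)) := by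
          rw [hαm]; group
      _ = (a : G) * (χ b g : G) * (σ b g : G) := by rw [← mul_assoc, ← hχσ]
      _ = (a : G) * (b : G) * (g : G) := by rw [mul_assoc, ← hχσ, mul_assoc]
      _ = (α a b : G) * (m a b : G) * (g : G) := by rw [hαm]
      _ = (α a b : G) * ((χ (m a b) g : G) * (σ (m a b) g : G)) := by rw [← hχσ]; group
      _ = (α a b : G) * (χ (m a b) g : G) * (σ (m a b) g : G) := by group
  have := hω.injective (a₁ := (χ a (χ b g) * α (σ a (χ b g)) (σ b g), m (σ a (χ b g)) (σ b g)))
    (a₂ := (α a b * χ (m a b) g, σ (m a b) g)) key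
  obtain ⟨h1', h2'⟩ := Prod.mk.injEq .. ▸ this
  exact ⟨h1', h2'.symm⟩
end

section
/- For all a, b, c ∈ G₂ one has α(a,b)·α(m(a,b), c) = (α(b,c))ᵃ · α(a^{α(b,c)}, m(b,c)) and m(m(a,b), c) = m(a^{α(b,c)}, m(b,c)). -/
/-- In a quasi-double group decomposition `G = G₁ · G₂`,
for all `a b c ∈ G₂`:
`α(a,b) · α(m(a,b), c) = (α(b,c))ᵃ · α(a^(α(b,c)), m(b,c))` and
`m(m(a,b), c) = m(a^(α(b,c)), m(b,c))`. -/
theorem stmt_2 {G : Type*} [Group G] (G₁ : Subgroup G) (G₂ : Set G)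
    (h1 : (1 : G) ∈ G₂)
    (hω : Function.Bijective (fun p : G₁ × G₂ => (p.1 : G) * (p.2 : G)))
    (α : G₂ → G₂ → G₁) (m : G₂ → G₂ → G₂)
    (hαm : ∀ a b : G₂, (a : G) * (b : G) = (α a b : G) * (m a b : G))
    (χ : G₂ → G₁ → G₁) (σ : G₂ → G₁ → G₂)
    (hχσ : ∀ (a : G₂) (g : G₁), (a : G) * (g : G) = (χ a g : G) * (σ a g : G)) :
    ∀ a b c : G₂,
      α a b * α (m a b) c = χ a (α b c) * α (σ a (α b c)) (m b c) ∧
      m (m a b) c = m (σ a (α b c)) (m b c) := by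
  intro a b c
  have key : ((α a b * α (m a b) c : G₁) : G) * (m (m a b) c : G)
      = ((χ a (α b c) * α (σ a (α b c)) (m b c) : G₁) : G)
        * (m (σ a (α b c)) (m b c) : G) := by
    push_cast
    calc (α a b : G) * (α (m a b) c) * (m (m a b) c)
        = (α a b) * ((m a b : G) * c) := by rw [mul_assoc, ← hαm]
      _ = ((a : G) * b) * c := by rw [hαm a b, mul_assoc]
      _ = (a : G) * ((b : G) * c) := by group
      _ = (a : G) * ((α b c : G) * (m b c)) := by rw [hαm]
      _ = ((a : G) * (α b c)) * (m b c) := by group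
      _ = ((χ a (α b c) : G) * (σ a (α b c))) * (m b c) := by rw [hχσ]
      _ = (χ a (α b c) : G) * ((σ a (α b c) : G) * (m b c)) := by group
      _ = (χ a (α b c) : G) * ((α (σ a (α b c)) (m b c) : G) * (m (σ a (α b c)) (m b c))) := by
          rw [hαm]
      _ = _ := by group
  have := hω.injective (a₁ := (α a b * α (m a b) c, m (m a b) c))
    (a₂ := (χ a (α b c) * α (σ a (α b c)) (m b c), m (σ a (α b c)) (m b c))) key
  exact ⟨congrArg Prod.fst this, congrArg Prod.snd this⟩
end

section
/- Under hypotheses (1)-(6), the product on G₁ × G₂ defined by (g,a)·(h,b) := (g · hᵃ · α(aʰ, b), m(aʰ, b)) is associative. -/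
/-- Let `G₁` be a group acting on the right on a set `G₂`
(via `σ`), with maps `m : G₂ → G₂ → G₂`, `χ : G₂ → G₁ → G₁` and
`α : G₂ → G₂ → G₁` satisfying conditions (1)-(6) of a quasi-double structure.
Then the product on `G₁ × G₂` defined by
`(g,a)·(h,b) := (g · hᵃ · α(aʰ, b), m(aʰ, b))` is associative. -/
theorem stmt_3 {G₁ : Type*} [Group G₁] {G₂ : Type*}
    (m : G₂ → G₂ → G₂) (σ : G₂ → G₁ → G₂) (χ : G₂ → G₁ → G₁) (α : G₂ → G₂ → G₁)
    (hσone : ∀ a : G₂, σ a 1 = a)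
    (h1 : ∀ (g h : G₁) (a : G₂), χ a (g * h) = χ a g * χ (σ a g) h)
    (h2 : ∀ (a : G₂) (g h : G₁), σ a (g * h) = σ (σ a g) h)
    (h3 : ∀ (g : G₁) (a b : G₂),
      χ a (χ b g) * α (σ a (χ b g)) (σ b g) = α a b * χ (m a b) g)
    (h4 : ∀ (g : G₁) (a b : G₂), σ (m a b) g = m (σ a (χ b g)) (σ b g))
    (h5 : ∀ a b c : G₂,
      α a b * α (m a b) c = χ a (α b c) * α (σ a (α b c)) (m b c))
    (h6 : ∀ a b c : G₂, m (m a b) c = m (σ a (α b c)) (m b c))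
    (mul : G₁ × G₂ → G₁ × G₂ → G₁ × G₂)
    (hmul : ∀ (g h : G₁) (a b : G₂),
      mul (g, a) (h, b) = (g * χ a h * α (σ a h) b, m (σ a h) b)) :
    ∀ p q r : G₁ × G₂, mul (mul p q) r = mul p (mul q r) := by
  rintro ⟨g, a⟩ ⟨h, b⟩ ⟨k, c⟩
  simp only [hmul, Prod.mk.injEq, h1, h2, h4]
  constructor
  · calc g * χ a h * α (σ a h) b * χ (m (σ a h) b) k *
          α (m (σ (σ a h) (χ b k)) (σ b k)) c
        = g * χ a h * ((α (σ a h) b * χ (m (σ a h) b) k) *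
          α (m (σ (σ a h) (χ b k)) (σ b k)) c) := by group
      _ = g * χ a h * ((χ (σ a h) (χ b k) * α (σ (σ a h) (χ b k)) (σ b k)) *
          α (m (σ (σ a h) (χ b k)) (σ b k)) c) := by rw [h3]
      _ = g * (χ a h * χ (σ a h) (χ b k)) * (α (σ (σ a h) (χ b k)) (σ b k) *
          α (m (σ (σ a h) (χ b k)) (σ b k)) c) := by group
      _ = g * (χ a h * χ (σ a h) (χ b k)) *
          (χ (σ (σ a h) (χ b k)) (α (σ b k) c) *
          α (σ (σ (σ a h) (χ b k)) (α (σ b k) c)) (m (σ b k) c)) := by rw [h5]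
      _ = _ := by group
  · rw [← h6]
end

section
/- For all a, b, c ∈ G₂ one has m(c, m(a,b)) = m(m(c^{α(a,b)⁻¹}, a), b) and m(m(a,c), b) = m(a^{α(c,b)}, m(c,b)); i.e., denoting by λ_a and ρ_a the left and right translations by a for the operation m, ρ_{m(a,b)}(c) = (ρ_b ∘ ρ_a)(c^{α(a,b)⁻¹}) and (ρ_b ∘ λ_a)(c) = (λ_{a^{α(c,b)}} ∘ ρ_b)(c). -/
/-- In a quasi-double group decomposition `G = G₁ · G₂`,
for all `a b c ∈ G₂`:
`m(c, m(a,b)) = m(m(c^(α(a,b)⁻¹), a), b)` (i.e. `ρ_{m(a,b)}(c) = (ρ_b ∘ ρ_a)(c^(α(a,b)⁻¹))`)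
and `m(m(a,c), b) = m(a^(α(c,b)), m(c,b))` (i.e. `(ρ_b ∘ λ_a)(c) = (λ_{a^(α(c,b))} ∘ ρ_b)(c)`). -/
theorem stmt_4 {G : Type*} [Group G] (G₁ : Subgroup G) (G₂ : Set G)
    (h1 : (1 : G) ∈ G₂)
    (hω : Function.Bijective (fun p : G₁ × G₂ => (p.1 : G) * (p.2 : G)))
    (α : G₂ → G₂ → G₁) (m : G₂ → G₂ → G₂)
    (hαm : ∀ a b : G₂, (a : G) * (b : G) = (α a b : G) * (m a b : G))
    (χ : G₂ → G₁ → G₁) (σ : G₂ → G₁ → G₂)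
    (hχσ : ∀ (a : G₂) (g : G₁), (a : G) * (g : G) = (χ a g : G) * (σ a g : G)) :
    ∀ a b c : G₂,
      m c (m a b) = m (m (σ c (α a b)⁻¹) a) b ∧
      m (m a c) b = m (σ a (α c b)) (m c b) := by
  have key : ∀ (g g' : G₁) (x x' : G₂), (g : G) * x = (g' : G) * x' → x = x' := by
    intro g g' x x' h
    exact congrArg Prod.snd (hω.1 (a₁ := (g, x)) (a₂ := (g', x')) h)
  intro a b c
  constructor
  · set γ := α a b with hγ
    set d := σ c γ⁻¹ with hd
    apply key (α c (m a b)) ((χ c γ⁻¹ : G₁) * α d a * α (m d a) b)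
    have hcd : (c : G) * ((γ : G₁) : G)⁻¹ = ((χ c γ⁻¹ : G₁) : G) * (d : G) := by
      have := hχσ c γ⁻¹; push_cast at this ⊢; exact this
    push_cast
    calc ((α c (m a b) : G₁) : G) * (m c (m a b) : G)
        = (c : G) * (m a b : G) := (hαm _ _).symm
      _ = (c : G) * (((γ : G₁) : G)⁻¹ * (((γ : G₁) : G) * (m a b : G))) := by
          rw [inv_mul_cancel_left]
      _ = ((c : G) * ((γ : G₁) : G)⁻¹) * ((a : G) * (b : G)) := by
          rw [← hαm a b, mul_assoc]
      _ = ((χ c γ⁻¹ : G₁) : G) * (d : G) * (a : G) * (b : G) := by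
          rw [hcd, mul_assoc, mul_assoc, mul_assoc]
      _ = ((χ c γ⁻¹ : G₁) : G) * ((α d a : G₁) * (m d a : G)) * (b : G) := by
          rw [mul_assoc _ (d : G), ← hαm d a]
      _ = ((χ c γ⁻¹ : G₁) : G) * (α d a : G₁) * ((α (m d a) b : G₁) * (m (m d a) b : G)) := by
          rw [← hαm (m d a) b, mul_assoc, mul_assoc, mul_assoc]
      _ = ((χ c γ⁻¹ : G₁) : G) * (α d a : G₁) * (α (m d a) b : G₁) * (m (m d a) b : G) := by
          simp [mul_assoc]
  · apply key ((α a c : G₁) * α (m a c) b) ((χ a (α c b) : G₁) * α (σ a (α c b)) (m c b))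
    push_cast
    calc ((α a c : G₁) : G) * (α (m a c) b : G) * (m (m a c) b : G)
        = ((α a c : G₁) : G) * ((m a c : G) * (b : G)) := by
          rw [mul_assoc, ← hαm]
      _ = (a : G) * (c : G) * (b : G) := by rw [← mul_assoc, ← hαm]
      _ = (a : G) * ((α c b : G₁) : G) * (m c b : G) := by rw [mul_assoc, hαm, mul_assoc]
      _ = ((χ a (α c b) : G₁) : G) * (σ a (α c b) : G) * (m c b : G) := by rw [hχσ]
      _ = ((χ a (α c b) : G₁) : G) * (α (σ a (α c b)) (m c b) : G) * (m (σ a (α c b)) (m c b) : G) := by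
          rw [mul_assoc, hαm, mul_assoc]
end

section
/- Let a, b ∈ G₂ and k, l ∈ ℤ be such that the powers bᵏ, bˡ and b^{k+l} (computed in the group G) all lie in G₂. Then m(m(a, bᵏ), bˡ) = m(a, b^{k+l}) = m(a, m(bᵏ, bˡ)); that is, the operation m satisfies the right mono-alternative law on such elements. -/
/-- In a quasi-double group decomposition `G = G₁ · G₂`,
let `a b ∈ G₂` and `k l : ℤ` be such that the powers `b^k`, `b^l`, `b^(k+l)`
(computed in the group `G`) lie in `G₂`. Then
`m(m(a, b^k), b^l) = m(a, b^(k+l)) = m(a, m(b^k, b^l))`: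
the operation `m` is right mono-alternative on such elements. -/
theorem stmt_6 {G : Type*} [Group G] (G₁ : Subgroup G) (G₂ : Set G)
    (h1 : (1 : G) ∈ G₂)
    (hω : Function.Bijective (fun p : G₁ × G₂ => (p.1 : G) * (p.2 : G)))
    (α : G₂ → G₂ → G₁) (m : G₂ → G₂ → G₂)
    (hαm : ∀ a b : G₂, (a : G) * (b : G) = (α a b : G) * (m a b : G))
    (χ : G₂ → G₁ → G₁) (σ : G₂ → G₁ → G₂)
    (hχσ : ∀ (a : G₂) (g : G₁), (a : G) * (g : G) = (χ a g : G) * (σ a g : G))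
    (a b : G₂) (k l : ℤ)
    (hk : (b : G) ^ k ∈ G₂) (hl : (b : G) ^ l ∈ G₂) (hkl : (b : G) ^ (k + l) ∈ G₂) :
    m (m a ⟨(b : G) ^ k, hk⟩) ⟨(b : G) ^ l, hl⟩ = m a ⟨(b : G) ^ (k + l), hkl⟩ ∧
    m a ⟨(b : G) ^ (k + l), hkl⟩ = m a (m ⟨(b : G) ^ k, hk⟩ ⟨(b : G) ^ l, hl⟩) := by
  have key : ∀ (g g' : G₁) (c c' : G₂), (g : G) * c = (g' : G) * c' → c = c' := by
    intro g g' c c' h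
    have := hω.injective (a₁ := (g, c)) (a₂ := (g', c')) h
    exact (Prod.ext_iff.mp this).2
  set x : G₂ := ⟨(b : G) ^ k, hk⟩
  set y : G₂ := ⟨(b : G) ^ l, hl⟩
  set z : G₂ := ⟨(b : G) ^ (k + l), hkl⟩
  have hxy : (x : G) * (y : G) = (z : G) := by
    simp only [x, y, z, ← zpow_add]
  have hmxy : m x y = z := by
    apply key (α x y) 1
    rw [← hαm x y, hxy]
    simp
  constructor
  · apply key (α a x * α (m a x) y) (α a z)
    push_cast
    rw [mul_assoc, ← hαm, ← mul_assoc, ← hαm, mul_assoc, hxy, ← hαm]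
  · rw [hmxy]
end

section
/- For all ξ ∈ g₁ and x, y ∈ g₂ one has (μ(x,y))^ξ = μ(x^ξ, y) + μ(x, y^ξ) + x^{(ξʸ)} − y^{(ξˣ)} and ξ^{μ(x,y)} = (ξʸ)ˣ − (ξˣ)ʸ + [ξ, ψ(x,y)] + ψ(x^ξ, y) + ψ(x, y^ξ). -/
/-- Let `g = g₁ ⊕ g₂` be a quasi-double Lie algebra over `ℝ`,
with projections `π₁, π₂`. Writing `ψ(x,y) := π₁⁅x,y⁆`, `μ(x,y) := π₂⁅x,y⁆`,
`ξˣ := π₁⁅x, ξ⁆` and `x^ξ := π₂⁅x, ξ⁆`, one has, for all `ξ ∈ g₁`, `x y ∈ g₂`: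
`(μ(x,y))^ξ = μ(x^ξ, y) + μ(x, y^ξ) + x^(ξʸ) − y^(ξˣ)` and
`ξ^(μ(x,y)) = (ξʸ)ˣ − (ξˣ)ʸ + [ξ, ψ(x,y)] + ψ(x^ξ, y) + ψ(x, y^ξ)`. -/
theorem stmt_8 {g : Type*} [LieRing g] [LieAlgebra ℝ g]
    (g₁ : LieSubalgebra ℝ g) (g₂ : Submodule ℝ g)
    (hcompl : IsCompl g₁.toSubmodule g₂)
    (π₁ : g →ₗ[ℝ] g₁) (π₂ : g →ₗ[ℝ] g₂)
    (hπ : ∀ v : g, ((π₁ v : g) + (π₂ v : g) = v)) :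
    ∀ (ξ : g₁) (x y : g₂),
      π₂ ⁅((π₂ ⁅(x : g), (y : g)⁆ : g)), (ξ : g)⁆ =
        π₂ ⁅((π₂ ⁅(x : g), (ξ : g)⁆ : g)), (y : g)⁆
          + π₂ ⁅(x : g), ((π₂ ⁅(y : g), (ξ : g)⁆ : g))⁆
          + π₂ ⁅(x : g), ((π₁ ⁅(y : g), (ξ : g)⁆ : g))⁆
          - π₂ ⁅(y : g), ((π₁ ⁅(x : g), (ξ : g)⁆ : g))⁆ ∧
      π₁ ⁅((π₂ ⁅(x : g), (y : g)⁆ : g)), (ξ : g)⁆ =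
        π₁ ⁅(x : g), ((π₁ ⁅(y : g), (ξ : g)⁆ : g))⁆
          - π₁ ⁅(y : g), ((π₁ ⁅(x : g), (ξ : g)⁆ : g))⁆
          + ⁅ξ, π₁ ⁅(x : g), (y : g)⁆⁆
          + π₁ ⁅((π₂ ⁅(x : g), (ξ : g)⁆ : g)), (y : g)⁆
          + π₁ ⁅(x : g), ((π₂ ⁅(y : g), (ξ : g)⁆ : g))⁆ := by
  intro ξ x y
  -- projections act as expected on members of g₁ and g₂
  have hg1 : ∀ a : g, a ∈ g₁ → (π₁ a : g) = a ∧ (π₂ a : g) = 0 := by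
    intro a ha
    have key : (π₂ a : g) = 0 := by
      have hmem : (π₂ a : g) ∈ g₁.toSubmodule ⊓ g₂ := by
        refine ⟨?_, (π₂ a).2⟩
        have h' : (π₂ a : g) = a - (π₁ a : g) := eq_sub_of_add_eq' (hπ a)
        rw [h']
        exact sub_mem ha (π₁ a).2
      simpa [hcompl.inf_eq_bot] using hmem
    have h1 : (π₁ a : g) = a := by
      have h := hπ a
      rw [key, add_zero] at h
      exact h
    exact ⟨h1, key⟩
  set A : g := ⁅(x : g), (y : g)⁆ with hAdef
  set B : g := ⁅(x : g), (ξ : g)⁆ with hBdef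
  set C : g := ⁅(y : g), (ξ : g)⁆ with hCdef
  have hA2 : (π₂ A : g) = A - (π₁ A : g) := eq_sub_of_add_eq' (hπ A)
  have hB : ((π₁ B : g)) + (π₂ B : g) = B := hπ B
  have hC : ((π₁ C : g)) + (π₂ C : g) = C := hπ C
  have hmemg1 : ⁅((π₁ A : g)), (ξ : g)⁆ ∈ g₁ := g₁.lie_mem (π₁ A).2 ξ.2
  obtain ⟨hP1, hP2⟩ := hg1 _ hmemg1
  constructor
  · apply Subtype.ext
    have expand : π₂ ⁅((π₂ A : g)), (ξ : g)⁆ =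
        π₂ ⁅A, (ξ : g)⁆ - π₂ ⁅((π₁ A : g)), (ξ : g)⁆ := by
      rw [hA2, sub_lie, map_sub]
    have hJ : ⁅A, (ξ : g)⁆ = ⁅(x : g), C⁆ - ⁅(y : g), B⁆ := lie_lie _ _ _
    have hxC : ⁅(x : g), C⁆ = ⁅(x : g), ((π₁ C : g))⁆ + ⁅(x : g), ((π₂ C : g))⁆ := by
      rw [← lie_add, hC]
    have hyB : ⁅(y : g), B⁆ = ⁅(y : g), ((π₁ B : g))⁆ + ⁅(y : g), ((π₂ B : g))⁆ := by
      rw [← lie_add, hB]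
    have hBy : ⁅((π₂ B : g)), (y : g)⁆ = -⁅(y : g), ((π₂ B : g))⁆ := (lie_skew _ _).symm
    rw [expand, hJ, hxC, hyB, hBy]
    simp only [map_sub, map_add, map_neg]
    push_cast
    rw [hP2]
    abel
  · apply Subtype.ext
    have expand : π₁ ⁅((π₂ A : g)), (ξ : g)⁆ =
        π₁ ⁅A, (ξ : g)⁆ - π₁ ⁅((π₁ A : g)), (ξ : g)⁆ := by
      rw [hA2, sub_lie, map_sub]
    have hJ : ⁅A, (ξ : g)⁆ = ⁅(x : g), C⁆ - ⁅(y : g), B⁆ := lie_lie _ _ _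
    have hxC : ⁅(x : g), C⁆ = ⁅(x : g), ((π₁ C : g))⁆ + ⁅(x : g), ((π₂ C : g))⁆ := by
      rw [← lie_add, hC]
    have hyB : ⁅(y : g), B⁆ = ⁅(y : g), ((π₁ B : g))⁆ + ⁅(y : g), ((π₂ B : g))⁆ := by
      rw [← lie_add, hB]
    have hBy : ⁅((π₂ B : g)), (y : g)⁆ = -⁅(y : g), ((π₂ B : g))⁆ := (lie_skew _ _).symm
    have hcoe : ((⁅ξ, π₁ A⁆ : g₁) : g) = ⁅(ξ : g), ((π₁ A : g))⁆ := rfl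
    rw [expand, hJ, hxC, hyB, hBy]
    simp only [map_sub, map_add, map_neg]
    push_cast
    rw [hP1, ← lie_skew ((π₁ A : g)) ((ξ : g))]
    abel
end

section
/- For all x, y, z ∈ g₂, the cyclic sum over (x,y,z) of μ(μ(x,y), z) equals the cyclic sum of x^{ψ(y,z)} (in g₂), and the cyclic sum of ψ(μ(x,y), z) equals the cyclic sum of (ψ(x,y))^z (in g₁). -/
/-- Let `g = g₁ ⊕ g₂` be a quasi-double Lie algebra over `ℝ`,
with projections `π₁, π₂`. Writing `ψ(x,y) := π₁⁅x,y⁆`, `μ(x,y) := π₂⁅x,y⁆`,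
`ξˣ := π₁⁅x, ξ⁆` and `x^ξ := π₂⁅x, ξ⁆`, one has, for all `x y z ∈ g₂`:
the cyclic sum of `μ(μ(x,y), z)` equals the cyclic sum of `x^(ψ(y,z))` in `g₂`,
and the cyclic sum of `ψ(μ(x,y), z)` equals the cyclic sum of `(ψ(x,y))^z` in `g₁`. -/
theorem stmt_9 {g : Type*} [LieRing g] [LieAlgebra ℝ g]
    (g₁ : LieSubalgebra ℝ g) (g₂ : Submodule ℝ g)
    (hcompl : IsCompl g₁.toSubmodule g₂)
    (π₁ : g →ₗ[ℝ] g₁) (π₂ : g →ₗ[ℝ] g₂)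
    (hπ : ∀ v : g, ((π₁ v : g) + (π₂ v : g) = v)) :
    ∀ x y z : g₂,
      π₂ ⁅((π₂ ⁅(x : g), (y : g)⁆ : g)), (z : g)⁆
          + π₂ ⁅((π₂ ⁅(y : g), (z : g)⁆ : g)), (x : g)⁆
          + π₂ ⁅((π₂ ⁅(z : g), (x : g)⁆ : g)), (y : g)⁆ =
        π₂ ⁅(x : g), ((π₁ ⁅(y : g), (z : g)⁆ : g))⁆
          + π₂ ⁅(y : g), ((π₁ ⁅(z : g), (x : g)⁆ : g))⁆
          + π₂ ⁅(z : g), ((π₁ ⁅(x : g), (y : g)⁆ : g))⁆ ∧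
      π₁ ⁅((π₂ ⁅(x : g), (y : g)⁆ : g)), (z : g)⁆
          + π₁ ⁅((π₂ ⁅(y : g), (z : g)⁆ : g)), (x : g)⁆
          + π₁ ⁅((π₂ ⁅(z : g), (x : g)⁆ : g)), (y : g)⁆ =
        π₁ ⁅(z : g), ((π₁ ⁅(x : g), (y : g)⁆ : g))⁆
          + π₁ ⁅(x : g), ((π₁ ⁅(y : g), (z : g)⁆ : g))⁆
          + π₁ ⁅(y : g), ((π₁ ⁅(z : g), (x : g)⁆ : g))⁆ := by
  intro x y z
  have jac : ⁅⁅(x : g), (y : g)⁆, (z : g)⁆ + ⁅⁅(y : g), (z : g)⁆, (x : g)⁆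
      + ⁅⁅(z : g), (x : g)⁆, (y : g)⁆ = (0 : g) := by
    rw [← lie_skew ⁅(x:g),(y:g)⁆ ((z:g)), ← lie_skew ⁅(y:g),(z:g)⁆ ((x:g)),
      ← lie_skew ⁅(z:g),(x:g)⁆ ((y:g))]
    have j := lie_jacobi (x : g) (y : g) (z : g)
    linear_combination (norm := abel) -j
  have key₂ : ∀ a b : g, π₂ ⁅((π₂ a : g)), b⁆ = π₂ ⁅a, b⁆ - π₂ ⁅((π₁ a : g)), b⁆ := by
    intro a b
    have h : ⁅a, b⁆ = ⁅((π₁ a : g)), b⁆ + ⁅((π₂ a : g)), b⁆ := by rw [← add_lie, hπ]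
    rw [h, map_add]; abel
  have key₁ : ∀ a b : g, π₁ ⁅((π₂ a : g)), b⁆ = π₁ ⁅a, b⁆ - π₁ ⁅((π₁ a : g)), b⁆ := by
    intro a b
    have h : ⁅a, b⁆ = ⁅((π₁ a : g)), b⁆ + ⁅((π₂ a : g)), b⁆ := by rw [← add_lie, hπ]
    rw [h, map_add]; abel
  have J₂ : π₂ ⁅⁅(x : g), (y : g)⁆, (z : g)⁆ + π₂ ⁅⁅(y : g), (z : g)⁆, (x : g)⁆
      + π₂ ⁅⁅(z : g), (x : g)⁆, (y : g)⁆ = 0 := by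
    rw [← map_add, ← map_add, jac, map_zero]
  have J₁ : π₁ ⁅⁅(x : g), (y : g)⁆, (z : g)⁆ + π₁ ⁅⁅(y : g), (z : g)⁆, (x : g)⁆
      + π₁ ⁅⁅(z : g), (x : g)⁆, (y : g)⁆ = 0 := by
    rw [← map_add, ← map_add, jac, map_zero]
  have sk₂ : ∀ a b : g, π₂ ⁅a, b⁆ = - π₂ ⁅b, a⁆ := by
    intro a b; rw [← lie_skew, map_neg]
  have sk₁ : ∀ a b : g, π₁ ⁅a, b⁆ = - π₁ ⁅b, a⁆ := by
    intro a b; rw [← lie_skew, map_neg]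
  constructor
  · rw [key₂ ⁅(x:g),(y:g)⁆, key₂ ⁅(y:g),(z:g)⁆, key₂ ⁅(z:g),(x:g)⁆,
      sk₂ (x:g) ((π₁ ⁅(y:g),(z:g)⁆ : g)), sk₂ (y:g) ((π₁ ⁅(z:g),(x:g)⁆ : g)),
      sk₂ (z:g) ((π₁ ⁅(x:g),(y:g)⁆ : g))]
    linear_combination (norm := abel) J₂
  · rw [key₁ ⁅(x:g),(y:g)⁆, key₁ ⁅(y:g),(z:g)⁆, key₁ ⁅(z:g),(x:g)⁆,
      sk₁ (z:g) ((π₁ ⁅(x:g),(y:g)⁆ : g)), sk₁ (x:g) ((π₁ ⁅(y:g),(z:g)⁆ : g)),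
      sk₁ (y:g) ((π₁ ⁅(z:g),(x:g)⁆ : g))]
    linear_combination (norm := abel) J₁
end

section
/- Under hypotheses (1)-(6), the bracket on the direct sum g₁ ⊕ g₂ defined by [(ξ,x), (η,y)] := ([ξ,η] + ηˣ − ξʸ + ψ(x,y), x^η − y^ξ + μ(x,y)) is alternating and satisfies the Jacobi identity, i.e. it makes g₁ ⊕ g₂ a real Lie algebra containing g₁ as a Lie subalgebra. -/
/-- Let `g₁` be a real Lie algebra acting on a real vector
space `g₂` via bilinear maps `a2 : (x,ξ) ↦ x^ξ ∈ g₂` and `a1 : (x,ξ) ↦ ξˣ ∈ g₁`,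
together with alternating bilinear maps `μ : g₂ × g₂ → g₂` and
`ψ : g₂ × g₂ → g₁` satisfying conditions (1)-(6) of a quasi-double Lie algebra.
Then the bracket on `g₁ ⊕ g₂` defined by
`[(ξ,x),(η,y)] := ([ξ,η] + ηˣ − ξʸ + ψ(x,y), x^η − y^ξ + μ(x,y))`
is alternating and satisfies the Jacobi identity, i.e. it makes `g₁ ⊕ g₂`
a real Lie algebra containing `g₁` as a Lie subalgebra. -/
theorem stmt_10 {g₁ : Type*} [LieRing g₁] [LieAlgebra ℝ g₁]
    {g₂ : Type*} [AddCommGroup g₂] [Module ℝ g₂]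
    (a2 : g₂ →ₗ[ℝ] g₁ →ₗ[ℝ] g₂) (a1 : g₂ →ₗ[ℝ] g₁ →ₗ[ℝ] g₁)
    (μ : g₂ →ₗ[ℝ] g₂ →ₗ[ℝ] g₂) (hμalt : ∀ x : g₂, μ x x = 0)
    (ψ : g₂ →ₗ[ℝ] g₂ →ₗ[ℝ] g₁) (hψalt : ∀ x : g₂, ψ x x = 0)
    (h1 : ∀ (ξ η : g₁) (x : g₂),
      a1 x ⁅ξ, η⁆ = ⁅a1 x ξ, η⁆ + ⁅ξ, a1 x η⁆ - a1 (a2 x η) ξ + a1 (a2 x ξ) η)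
    (h2 : ∀ (ξ η : g₁) (x : g₂),
      a2 x ⁅ξ, η⁆ = a2 (a2 x ξ) η - a2 (a2 x η) ξ)
    (h3 : ∀ (ξ : g₁) (x y : g₂),
      a2 (μ x y) ξ = μ (a2 x ξ) y + μ x (a2 y ξ) + a2 x (a1 y ξ) - a2 y (a1 x ξ))
    (h4 : ∀ (ξ : g₁) (x y : g₂),
      a1 (μ x y) ξ = a1 x (a1 y ξ) - a1 y (a1 x ξ) + ⁅ξ, ψ x y⁆
        + ψ (a2 x ξ) y + ψ x (a2 y ξ))
    (h5 : ∀ x y z : g₂,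
      μ (μ x y) z + μ (μ y z) x + μ (μ z x) y =
        a2 x (ψ y z) + a2 y (ψ z x) + a2 z (ψ x y))
    (h6 : ∀ x y z : g₂,
      ψ (μ x y) z + ψ (μ y z) x + ψ (μ z x) y =
        a1 z (ψ x y) + a1 x (ψ y z) + a1 y (ψ z x))
    (B : g₁ × g₂ → g₁ × g₂ → g₁ × g₂)
    (hB : ∀ (ξ η : g₁) (x y : g₂),
      B (ξ, x) (η, y) = (⁅ξ, η⁆ + a1 x η - a1 y ξ + ψ x y, a2 x η - a2 y ξ + μ x y)) :
    (∀ u : g₁ × g₂, B u u = 0) ∧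
    (∀ u v w : g₁ × g₂, B (B u v) w + B (B v w) u + B (B w u) v = 0) ∧
    (∀ ξ η : g₁, B (ξ, 0) (η, 0) = (⁅ξ, η⁆, 0)) := by
  have hμ2 : ∀ a b : g₂, μ a b + μ b a = 0 := by
    intro a b
    have h := hμalt (a + b)
    simp only [map_add, LinearMap.add_apply, hμalt] at h
    linear_combination (norm := module) h
  have hψ2 : ∀ a b : g₂, ψ a b + ψ b a = 0 := by
    intro a b
    have h := hψalt (a + b)
    simp only [map_add, LinearMap.add_apply, hψalt] at h
    linear_combination (norm := module) h
  have hlie : ∀ a b : g₁, ⁅a, b⁆ + ⁅b, a⁆ = 0 := by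
    intro a b
    rw [← lie_skew a b]; abel
  have hjac : ∀ a b c : g₁, ⁅⁅a, b⁆, c⁆ + ⁅⁅b, c⁆, a⁆ + ⁅⁅c, a⁆, b⁆ = 0 := by
    intro a b c
    linear_combination (norm := module)
      hlie ⁅a, b⁆ c + hlie ⁅b, c⁆ a + hlie ⁅c, a⁆ b - lie_jacobi a b c
  refine ⟨?_, ?_, ?_⟩
  · rintro ⟨ξ, x⟩
    rw [hB]
    simp [hψalt, hμalt]
  · rintro ⟨ξ, x⟩ ⟨η, y⟩ ⟨ζ, z⟩
    simp only [hB]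
    rw [Prod.ext_iff]
    simp only [Prod.fst_add, Prod.snd_add, Prod.fst_zero, Prod.snd_zero,
      map_add, map_sub, LinearMap.add_apply, LinearMap.sub_apply,
      lie_add, add_lie, lie_sub, sub_lie]
    constructor
    · linear_combination (norm := module)
        - h1 ξ η z - h1 η ζ x - h1 ζ ξ y
        + h4 ξ y z + h4 η z x + h4 ζ x y
        + h6 x y z
        - hlie η (a1 x ζ) - hlie ζ (a1 y ξ) - hlie ξ (a1 z η)
        + hlie η (ψ z x) + hlie ξ (ψ y z) + hlie ζ (ψ x y)
        + hψ2 z (a2 x η) + hψ2 y (a2 z ξ) + hψ2 x (a2 y ζ)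
        + hjac ξ η ζ
    · linear_combination (norm := module)
        - h2 ξ η z - h2 η ζ x - h2 ζ ξ y
        + h3 ξ y z + h3 η z x + h3 ζ x y
        + h5 x y z
        + hμ2 y (a2 z ξ) + hμ2 z (a2 x η) + hμ2 x (a2 y ζ)
  · intro ξ η
    rw [hB]
    simp
end

section
/- Define on g₂ the bilinear bracket [x,y]_{g₂} := μ(x,y) and the trilinear operation ⟨x,y,z⟩ := (1/2)·x^{ψ(y,z)}. Then (g₂, [·,·]_{g₂}, ⟨·,·,·⟩) is an Akivis algebra: for all x₁, x₂, x₃ ∈ g₂, the sum over all permutations σ ∈ S₃ of sign(σ)·⟨x_{σ(1)}, x_{σ(2)}, x_{σ(3)}⟩ equals the cyclic sum over (x₁,x₂,x₃) of [[x₁,x₂]_{g₂}, x₃]_{g₂}. -/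
/-- Let `g = g₁ ⊕ g₂` be a quasi-double Lie algebra over `ℝ`,
with projections `π₁, π₂`. Define on `g₂` the bracket `[x,y] := μ(x,y) = π₂⁅x,y⁆`
and the trilinear operation `⟨x,y,z⟩ := (1/2) • x^(ψ(y,z)) = (1/2) • π₂⁅x, π₁⁅y,z⁆⁆`.
Then `(g₂, [·,·], ⟨·,·,·⟩)` is an Akivis algebra: the signed sum of `⟨·,·,·⟩`
over all permutations of `(x,y,z)` equals the cyclic sum of `[[x,y],z]`. -/
theorem stmt_11 {g : Type*} [LieRing g] [LieAlgebra ℝ g]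
    (g₁ : LieSubalgebra ℝ g) (g₂ : Submodule ℝ g)
    (hcompl : IsCompl g₁.toSubmodule g₂)
    (π₁ : g →ₗ[ℝ] g₁) (π₂ : g →ₗ[ℝ] g₂)
    (hπ : ∀ v : g, ((π₁ v : g) + (π₂ v : g) = v)) :
    ∀ x y z : g₂,
      (let T : g₂ → g₂ → g₂ → g₂ := fun u v w =>
        ((1 : ℝ) / 2) • π₂ ⁅(u : g), ((π₁ ⁅(v : g), (w : g)⁆ : g))⁆
      let B : g₂ → g₂ → g₂ := fun u v => π₂ ⁅(u : g), (v : g)⁆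
      T x y z - T x z y - T y x z + T y z x + T z x y - T z y x
        = B (B x y) z + B (B y z) x + B (B z x) y) := by
  intro x y z
  simp only []
  apply Subtype.ext
  push_cast
  -- π₂ v = v - π₁ v in g
  have h : ∀ v : g, ((π₂ v : g)) = v - ((π₁ v : g)) := fun v =>
    eq_sub_of_add_eq' (hπ v)
  -- antisymmetry of π₁ of bracket
  have hskew : ∀ a b : g, ((π₁ ⁅a, b⁆ : g)) = -((π₁ ⁅b, a⁆ : g)) := by
    intro a b
    rw [← lie_skew b a, map_neg]
    simp
  -- expand B (B x y) z type terms
  have key : ∀ a b c : g,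
      ((π₂ ⁅((π₂ ⁅a, b⁆ : g)), c⁆ : g))
        = ((π₂ ⁅⁅a, b⁆, c⁆ : g)) - ((π₂ ⁅((π₁ ⁅a, b⁆ : g)), c⁆ : g)) := by
    intro a b c
    rw [h ⁅a, b⁆, sub_lie, map_sub]
    push_cast
    ring_nf
  -- Jacobi, pushed through π₂
  have jac : ((π₂ ⁅⁅(x : g), (y : g)⁆, (z : g)⁆ : g))
      + ((π₂ ⁅⁅(y : g), (z : g)⁆, (x : g)⁆ : g))
      + ((π₂ ⁅⁅(z : g), (x : g)⁆, (y : g)⁆ : g)) = 0 := by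
    have h0 : ⁅⁅(x : g), (y : g)⁆, (z : g)⁆ + ⁅⁅(y : g), (z : g)⁆, (x : g)⁆
        + ⁅⁅(z : g), (x : g)⁆, (y : g)⁆ = 0 := by
      have hj := lie_jacobi (z : g) (x : g) (y : g)
      rw [← lie_skew ⁅(x : g), (y : g)⁆ (z : g), ← lie_skew ⁅(y : g), (z : g)⁆ (x : g),
        ← lie_skew ⁅(z : g), (x : g)⁆ (y : g)]
      linear_combination (norm := abel) -hj
    calc ((π₂ ⁅⁅(x : g), (y : g)⁆, (z : g)⁆ : g))
          + ((π₂ ⁅⁅(y : g), (z : g)⁆, (x : g)⁆ : g))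
          + ((π₂ ⁅⁅(z : g), (x : g)⁆, (y : g)⁆ : g))
        = ((π₂ (⁅⁅(x : g), (y : g)⁆, (z : g)⁆ + ⁅⁅(y : g), (z : g)⁆, (x : g)⁆
            + ⁅⁅(z : g), (x : g)⁆, (y : g)⁆) : g)) := by
          simp [map_add]
      _ = 0 := by rw [h0]; simp
  have hflip : ∀ a b : g, ((π₂ ⁅a, b⁆ : g)) = -((π₂ ⁅b, a⁆ : g)) := by
    intro a b
    rw [← lie_skew b a, map_neg]
    simp
  rw [key, key, key]
  rw [hskew (z : g) (y : g), hskew (x : g) (z : g), hskew (y : g) (x : g)]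
  simp only [lie_neg, map_neg, Submodule.coe_neg]
  rw [hflip ((π₁ ⁅(x : g), (y : g)⁆ : g)) (z : g),
      hflip ((π₁ ⁅(y : g), (z : g)⁆ : g)) (x : g),
      hflip ((π₁ ⁅(z : g), (x : g)⁆ : g)) (y : g)]
  linear_combination (norm := module) -jac
end

section
/- For all a, b ∈ SH(n): m(a,b) ∈ SH(n); m(a, 1) = m(1, a) = a where 1 is the identity matrix; and for all integers k, l ∈ ℤ, m(m(a, bᵏ), bˡ) = m(a, b^{k+l}) (the integer powers of b, computed in GL(n,ℂ), lie in SH(n)). Thus (SH(n), m) is a right mono-alternative loop. -/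
open Matrix ComplexOrder

/-- The set of `n × n` positive-definite Hermitian complex matrices of
determinant `1` (`Matrix.PosDef` includes Hermitian-ness). -/
def SH (n : ℕ) : Set (Matrix (Fin n) (Fin n) ℂ) :=
  {a | a.PosDef ∧ a.det = 1}

/-- The unique positive-semidefinite square root of a positive-semidefinite
matrix (junk value `0` otherwise). -/
noncomputable def msqrt {n : ℕ} (p : Matrix (Fin n) (Fin n) ℂ) :
    Matrix (Fin n) (Fin n) ℂ :=
  letI := Classical.dec p.PosSemidef
  if h : p.PosSemidef then
    (h.1.eigenvectorUnitary : Matrix (Fin n) (Fin n) ℂ) *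
      diagonal ((↑) ∘ (√·) ∘ h.1.eigenvalues) *
      (star h.1.eigenvectorUnitary : Matrix (Fin n) (Fin n) ℂ)
  else 0

/-- The loop multiplication `m(a,b) := (b·a²·b)^{1/2}` on `SH n`. -/
noncomputable def mSH {n : ℕ} (a b : Matrix (Fin n) (Fin n) ℂ) :
    Matrix (Fin n) (Fin n) ℂ :=
  msqrt (b * a ^ 2 * b)

/-!
The square root `msqrt` is the continuous-functional-calculus square root, so it is the unique
positive semidefinite square root; hence `m(a, b)` is characterised by `m(a, b)² = b a² b`.
For commuting Hermitian `c, d` this gives `m(m(a, c), d)² = d c a² c d = (c d) a² (c d)`, and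
the powers `b ^ k`, `b ^ l` of a single matrix commute with product `b ^ (k + l)`.
-/

theorem Matrix.det_zpow_of_det_eq_one {ι R : Type*} [Fintype ι] [DecidableEq ι] [CommRing R]
    {A : Matrix ι ι R} (h : A.det = 1) (k : ℤ) : (A ^ k).det = 1 := by
  have hA : IsUnit A.det := h ▸ isUnit_one
  obtain ⟨m, rfl | rfl⟩ := k.eq_nat_or_neg
  · rw [zpow_natCast, det_pow, h, one_pow]
  · rw [Matrix.zpow_neg hA, det_nonsing_inv, zpow_natCast, det_pow, h, one_pow,
      Ring.inverse_one]

section SquareRoot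

variable {n : ℕ} {p a b c d : Matrix (Fin n) (Fin n) ℂ}

open scoped MatrixOrder

theorem msqrt_eq_cfcSqrt (hp : p.PosSemidef) : msqrt p = CFC.sqrt p := by
  rw [msqrt, dif_pos hp, CFC.sqrt_eq_real_sqrt p hp.nonneg, cfcₙ_eq_cfc (hf0 := Real.sqrt_zero),
    hp.1.cfc_eq, Matrix.IsHermitian.cfc, Unitary.conjStarAlgAut_apply]
  rfl

theorem sq_msqrt (hp : p.PosSemidef) : msqrt p ^ 2 = p := by
  rw [msqrt_eq_cfcSqrt hp]
  exact CFC.sq_sqrt p hp.nonneg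

theorem msqrt_posSemidef (hp : p.PosSemidef) : (msqrt p).PosSemidef := by
  rw [msqrt_eq_cfcSqrt hp]
  exact (CFC.sqrt_nonneg p).posSemidef

theorem msqrt_sq (ha : a.PosSemidef) : msqrt (a ^ 2) = a := by
  rw [msqrt_eq_cfcSqrt (ha.pow 2)]
  exact CFC.sqrt_sq a ha.nonneg

theorem msqrt_mem_SH (hp : p.PosSemidef) (hdet : p.det = 1) : msqrt p ∈ SH n := by
  have hdet_sq : (msqrt p).det ^ 2 = 1 := by rw [← det_pow, sq_msqrt hp, hdet]
  have hpd : (msqrt p).PosDef :=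
    (msqrt_posSemidef hp).posDef_iff_det_ne_zero.mpr
      (by rintro h; simp [h] at hdet_sq)
  refine ⟨hpd, (sq_eq_one_iff.mp hdet_sq).resolve_right fun h => ?_⟩
  have := hpd.det_pos
  rw [h] at this
  norm_num at this

theorem posSemidef_mul_sq_mul (ha : a.IsHermitian) (hb : b.IsHermitian) :
    (b * a ^ 2 * b).PosSemidef := by
  have h : b * a ^ 2 * b = (b * a) * (b * a)ᴴ := by
    rw [conjTranspose_mul, ha.eq, hb.eq, sq]; noncomm_ring
  rw [h]
  exact posSemidef_self_mul_conjTranspose _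

theorem mSH_sq (ha : a.IsHermitian) (hb : b.IsHermitian) : mSH a b ^ 2 = b * a ^ 2 * b :=
  sq_msqrt (posSemidef_mul_sq_mul ha hb)

theorem mSH_mem_SH (ha : a ∈ SH n) (hb : b ∈ SH n) : mSH a b ∈ SH n := by
  refine msqrt_mem_SH (posSemidef_mul_sq_mul ha.1.1 hb.1.1) ?_
  rw [det_mul, det_mul, det_pow, ha.2, hb.2]
  ring

theorem mSH_one_right (ha : a.PosSemidef) : mSH a 1 = a := by
  rw [mSH, one_mul, mul_one, msqrt_sq ha]

theorem mSH_one_left (ha : a.PosSemidef) : mSH 1 a = a := by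
  rw [mSH, one_pow, mul_one, ← sq, msqrt_sq ha]

theorem mSH_mSH_of_commute (ha : a.IsHermitian) (hc : c.IsHermitian) (hcd : Commute c d) :
    mSH (mSH a c) d = mSH a (c * d) := by
  rw [mSH, mSH_sq ha hc, mSH]
  congr 1
  calc d * (c * a ^ 2 * c) * d = (d * c) * a ^ 2 * (c * d) := by noncomm_ring
    _ = (c * d) * a ^ 2 * (c * d) := by rw [hcd.eq]

theorem zpow_mem_SH (hb : b ∈ SH n) (k : ℤ) : b ^ k ∈ SH n := by
  have hdet := det_zpow_of_det_eq_one hb.2 k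
  exact ⟨((hb.1.posSemidef.zpow k).posDef_iff_det_ne_zero).mpr (by simp [hdet]), hdet⟩

end SquareRoot

/-- For all `a b ∈ SH n`: `m(a,b) ∈ SH n`;
`m(a,1) = m(1,a) = a`; the integer powers of `b` lie in `SH n`; and
`m(m(a, b^k), b^l) = m(a, b^(k+l))` for all `k l : ℤ`.
Thus `(SH n, m)` is a right mono-alternative loop. -/
theorem stmt_12 (n : ℕ) (a b : Matrix (Fin n) (Fin n) ℂ)
    (ha : a ∈ SH n) (hb : b ∈ SH n) :
    mSH a b ∈ SH n ∧
    mSH a 1 = a ∧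
    mSH 1 a = a ∧
    (∀ k : ℤ, b ^ k ∈ SH n) ∧
    (∀ k l : ℤ, mSH (mSH a (b ^ k)) (b ^ l) = mSH a (b ^ (k + l))) := by
  refine ⟨mSH_mem_SH ha hb, mSH_one_right ha.1.posSemidef, mSH_one_left ha.1.posSemidef,
    zpow_mem_SH hb, fun k l => ?_⟩
  rw [mSH_mSH_of_commute ha.1.1 (zpow_mem_SH hb k).1.1 (Matrix.Commute.zpow_zpow_self b k l),
    ← Matrix.zpow_add (hb.2 ▸ isUnit_one)]
end

section
/- The bracket M on F ⊕ F* defined by M(x,y) := μ(x,y) + ψ(x,y) for x,y ∈ F, M(x,ξ) := −ad*γ_ξ x + ad*μ_x ξ = −M(ξ,x) for x ∈ F, ξ ∈ F*, and M(ξ,η) := γ(ξ,η) for ξ,η ∈ F*, is a Lie bracket on F ⊕ F* (bilinear, alternating, satisfying the Jacobi identity), and it leaves invariant the canonical scalar product ⟨x+ξ, y+η⟩ := ⟨ξ,y⟩ + ⟨η,x⟩, i.e. ⟨M(u,v), w⟩ + ⟨v, M(u,w)⟩ = 0 for all u,v,w ∈ F ⊕ F*. (F ⊕ F* with M is the double of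 the quasi-Lie bialgebra (F, μ, γ, ψ).) -/
/-!
Once `ad*γ` is known to be bilinear (functionals separate points of `F`), bilinearity and
alternation of `M` can be read off its formula, and invariance of the pairing comes down to the
alternation of `μ`, `γ` and of the 3-form `ψ`. The Jacobiator of a bilinear bracket is trilinear
and cyclically symmetric, so it suffices to check it on the four type patterns `F F F`, `F F F*`,
`F F* F*`, `F* F* F*`. Pairing each component with a test vector turns these into the axioms:
(iii) and (iv); (ii) and (iii); the Jacobi identity of `γ` and (ii); the Jacobi identity of `γ`.
-/

open Module

section Jacobiator

variable {R A : Type*} [CommSemiring R] [AddCommGroup A] [Module R A]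

def jacobiator (B : A →ₗ[R] A →ₗ[R] A) (u v w : A) : A :=
  B (B u v) w + B (B v w) u + B (B w u) v

variable (B : A →ₗ[R] A →ₗ[R] A)

theorem jacobiator_cycle (u v w : A) : jacobiator B u v w = jacobiator B v w u := by
  unfold jacobiator; abel

theorem jacobiator_add_left (u u' v w : A) :
    jacobiator B (u + u') v w = jacobiator B u v w + jacobiator B u' v w := by
  simp only [jacobiator, map_add, LinearMap.add_apply]; abel

theorem jacobiator_add_middle (u v v' w : A) :
    jacobiator B u (v + v') w = jacobiator B u v w + jacobiator B u v' w := by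
  rw [jacobiator_cycle B u, jacobiator_add_left, ← jacobiator_cycle B u, ← jacobiator_cycle B u]

theorem jacobiator_add_right (u v w w' : A) :
    jacobiator B u v (w + w') = jacobiator B u v w + jacobiator B u v w' := by
  rw [← jacobiator_cycle B (w + w'), jacobiator_add_left, jacobiator_cycle B w,
    jacobiator_cycle B w']

end Jacobiator

theorem jacobiator_prod_eq_zero {R P Q : Type*} [CommSemiring R] [AddCommGroup P] [Module R P]
    [AddCommGroup Q] [Module R Q] (B : P × Q →ₗ[R] P × Q →ₗ[R] P × Q)
    (h₁ : ∀ x y z : P, jacobiator B (x, 0) (y, 0) (z, 0) = 0)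
    (h₂ : ∀ (x y : P) (ζ : Q), jacobiator B (x, 0) (y, 0) (0, ζ) = 0)
    (h₃ : ∀ (x : P) (η ζ : Q), jacobiator B (x, 0) (0, η) (0, ζ) = 0)
    (h₄ : ∀ ξ η ζ : Q, jacobiator B (0, ξ) (0, η) (0, ζ) = 0) (u v w : P × Q) :
    jacobiator B u v w = 0 := by
  have split (u : P × Q) : u = (u.1, 0) + (0, u.2) := by simp
  rw [split u, split v, split w]
  simp only [jacobiator_add_left, jacobiator_add_middle, jacobiator_add_right]
  -- a cyclic rotation brings the four remaining mixed terms into the shapes of `h₂` and `h₃`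
  rw [jacobiator_cycle B (0, u.2) (v.1, 0) (w.1, 0), jacobiator_cycle B (0, u.2) (v.1, 0) (0, w.2),
    ← jacobiator_cycle B (w.1, 0) (u.1, 0) (0, v.2), ← jacobiator_cycle B (w.1, 0) (0, u.2) (0, v.2)]
  simp only [h₁, h₂, h₃, h₄, add_zero]

theorem exists_linearMap₂_eq_of_dual_apply_eq_neg {R F A B : Type*} [CommRing R] [AddCommGroup F]
    [Module R F] [Projective R F] [AddCommGroup A] [Module R A] [AddCommGroup B] [Module R B]
    (β : A →ₗ[R] Dual R F →ₗ[R] Dual R B) (f : A → B → F)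
    (hf : ∀ a φ b, φ (f a b) = -(β a φ b)) : ∃ g : A →ₗ[R] B →ₗ[R] F, f = fun a b ↦ g a b := by
  have ext {v w : F} (h : ∀ φ : Dual R F, φ v = φ w) : v = w :=
    eval_apply_injective R (LinearMap.ext h)
  refine ⟨LinearMap.mk₂ R f ?_ ?_ ?_ ?_, rfl⟩ <;> intros <;> refine ext fun φ ↦ ?_ <;>
    simp only [hf, map_add, map_smul, LinearMap.add_apply, LinearMap.smul_apply, smul_eq_mul] <;>
    ring

section Double

variable {R F : Type*} [CommRing R] [AddCommGroup F] [Module R F]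
  (μ : F →ₗ[R] F →ₗ[R] F) (γ : Dual R F →ₗ[R] Dual R F →ₗ[R] Dual R F)
  (ψ : F →ₗ[R] F →ₗ[R] Dual R F) (aμ : F →ₗ[R] Dual R F →ₗ[R] Dual R F)
  (aγ : Dual R F →ₗ[R] F →ₗ[R] F)

/-- `aμ` and `aγ` are the coadjoint actions `ad*μ` and `ad*γ`; the last three fields are the
axioms (ii), (iii) and (iv). -/
structure IsQuasiLieBialgebra : Prop where
  bracket_isAlt : μ.IsAlt
  cobracket_isAlt : γ.IsAlt
  cobracket_jacobi : ∀ ξ η ζ, γ (γ ξ η) ζ + γ (γ η ζ) ξ + γ (γ ζ ξ) η = 0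
  threeForm_isAlt : ψ.IsAlt
  threeForm_swap : ∀ x y z, ψ x y z = -(ψ x z y)
  coadjoint_apply : ∀ x ξ y, aμ x ξ y = -(ξ (μ x y))
  apply_coadjoint : ∀ ξ η x, η (aγ ξ x) = -(γ ξ η x)
  cobracket_apply_bracket : ∀ x y ξ η,
    γ ξ η (μ x y) = -((γ (aμ x ξ) η + γ ξ (aμ x η)) y) + (γ (aμ y ξ) η + γ ξ (aμ y η)) x
  bracket_jacobi : ∀ x y z, μ (μ x y) z + μ (μ y z) x + μ (μ z x) y =
    -(aγ (ψ y z) x + aγ (ψ z x) y + aγ (ψ x y) z)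
  threeForm_bracket : ∀ x y z w, ψ (μ x y) z w + ψ (μ y z) x w + ψ (μ z x) y w =
    -(ψ y z (μ x w) + ψ z x (μ y w) + ψ x y (μ z w))

def doubleBracket : F × Dual R F →ₗ[R] F × Dual R F →ₗ[R] F × Dual R F :=
  LinearMap.mk₂ R
    (fun u v ↦ (μ u.1 v.1 - aγ v.2 u.1 + aγ u.2 v.1,
      ψ u.1 v.1 + aμ u.1 v.2 - aμ v.1 u.2 + γ u.2 v.2))
    (fun _ _ _ ↦ by
      ext <;> simp only [Prod.fst_add, Prod.snd_add, map_add, LinearMap.add_apply,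
        LinearMap.sub_apply] <;> abel)
    (fun _ _ _ ↦ by ext <;> simp [smul_sub])
    (fun _ _ _ ↦ by
      ext <;> simp only [Prod.fst_add, Prod.snd_add, map_add, LinearMap.add_apply,
        LinearMap.sub_apply] <;> abel)
    (fun _ _ _ ↦ by ext <;> simp [smul_sub])

@[simp]
theorem doubleBracket_apply (x y : F) (ξ η : Dual R F) :
    doubleBracket μ γ ψ aμ aγ (x, ξ) (y, η) =
      (μ x y - aγ η x + aγ ξ y, ψ x y + aμ x η - aμ y ξ + γ ξ η) :=
  rfl

namespace IsQuasiLieBialgebra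

variable {μ γ ψ aμ aγ} (h : IsQuasiLieBialgebra μ γ ψ aμ aγ)
include h

theorem apply_bracket (φ : Dual R F) (a x : F) : φ (μ a x) = aμ x φ a := by
  rw [h.coadjoint_apply, ← h.bracket_isAlt.neg, map_neg]

theorem threeForm_apply_coadjoint (ξ : Dual R F) (x y z : F) :
    ψ (aγ ξ x) y z = γ (ψ y z) ξ x := by
  rw [← h.threeForm_isAlt.neg, LinearMap.neg_apply, h.threeForm_swap, neg_neg, h.apply_coadjoint,
    ← h.cobracket_isAlt.neg, LinearMap.neg_apply, neg_neg]

theorem doubleBracket_self (u : F × Dual R F) : doubleBracket μ γ ψ aμ aγ u u = 0 := by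
  simp [doubleBracket, h.bracket_isAlt.self_eq_zero, h.cobracket_isAlt.self_eq_zero,
    h.threeForm_isAlt.self_eq_zero]

theorem doubleBracket_invariant (u v w : F × Dual R F) :
    ((doubleBracket μ γ ψ aμ aγ u v).2 w.1 + w.2 (doubleBracket μ γ ψ aμ aγ u v).1) +
      (v.2 (doubleBracket μ γ ψ aμ aγ u w).1 + (doubleBracket μ γ ψ aμ aγ u w).2 v.1) = 0 := by
  obtain ⟨x, ξ⟩ := u; obtain ⟨y, η⟩ := v; obtain ⟨z, ζ⟩ := w
  simp only [doubleBracket_apply, LinearMap.add_apply, LinearMap.sub_apply, h.threeForm_swap x y z,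
    h.coadjoint_apply, ← h.bracket_isAlt.neg z y, map_neg, neg_neg, map_add, map_sub,
    h.apply_coadjoint, ← h.cobracket_isAlt.neg ζ η, LinearMap.neg_apply, sub_neg_eq_add]
  ring

theorem jacobiator_doubleBracket_inl_inl_inl (x y z : F) :
    jacobiator (doubleBracket μ γ ψ aμ aγ) (x, 0) (y, 0) (z, 0) = 0 := by
  refine Prod.ext ?_ (LinearMap.ext fun w ↦ ?_)
  · simp only [jacobiator, doubleBracket_apply, map_zero, LinearMap.zero_apply, sub_zero, add_zero,
      Prod.mk_add_mk, Prod.fst_zero]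
    linear_combination (norm := module) h.bracket_jacobi x y z
  · simp only [jacobiator, doubleBracket_apply, map_zero, LinearMap.zero_apply, sub_zero, add_zero,
      Prod.mk_add_mk, LinearMap.add_apply, LinearMap.sub_apply, h.coadjoint_apply, sub_neg_eq_add,
      Prod.snd_zero]
    linear_combination h.threeForm_bracket x y z w

theorem jacobiator_doubleBracket_inl_inl_inr [Projective R F] (x y : F) (ζ : Dual R F) :
    jacobiator (doubleBracket μ γ ψ aμ aγ) (x, 0) (y, 0) (0, ζ) = 0 := by
  refine Prod.ext ((forall_dual_apply_eq_zero_iff R _).1 fun φ ↦ ?_) (LinearMap.ext fun w ↦ ?_)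
  · have key := h.cobracket_apply_bracket x y ζ φ
    simp only [LinearMap.add_apply] at key
    simp only [jacobiator, doubleBracket_apply, map_zero, LinearMap.zero_apply, sub_zero, add_zero,
      zero_sub, zero_add, map_neg, LinearMap.neg_apply, neg_zero, Prod.mk_add_mk, sub_self,
      sub_neg_eq_add, map_add, h.apply_coadjoint, neg_neg, h.apply_bracket φ (aγ _ _)]
    linear_combination key
  · have key := congrArg ζ (h.bracket_jacobi x y w)
    simp only [map_add, map_neg, h.apply_coadjoint] at key
    simp only [jacobiator, doubleBracket_apply, map_zero, LinearMap.zero_apply, sub_zero, add_zero,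
      zero_sub, zero_add, map_neg, LinearMap.neg_apply, neg_zero, Prod.mk_add_mk, sub_self,
      sub_neg_eq_add, LinearMap.add_apply, h.coadjoint_apply, LinearMap.sub_apply,
      h.threeForm_apply_coadjoint, ← h.threeForm_isAlt.neg w x, neg_neg, ← h.bracket_isAlt.neg w x,
      ← h.bracket_isAlt.neg (μ w x) y, ← h.bracket_isAlt.neg (μ y w) x, Prod.snd_zero]
    linear_combination -key

theorem jacobiator_doubleBracket_inl_inr_inr [Projective R F] (x : F) (η ζ : Dual R F) :
    jacobiator (doubleBracket μ γ ψ aμ aγ) (x, 0) (0, η) (0, ζ) = 0 := by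
  refine Prod.ext ((forall_dual_apply_eq_zero_iff R _).1 fun φ ↦ ?_) (LinearMap.ext fun w ↦ ?_)
  · have key := congrArg (fun ξ : Dual R F ↦ ξ x) (h.cobracket_jacobi η ζ φ)
    simp only [LinearMap.add_apply, LinearMap.zero_apply] at key
    simp only [jacobiator, doubleBracket_apply, map_zero, zero_sub, LinearMap.zero_apply, add_zero,
      zero_add, sub_zero, map_neg, LinearMap.neg_apply, neg_zero, sub_neg_eq_add, sub_self,
      Prod.mk_add_mk, map_add, h.apply_coadjoint, ← h.cobracket_isAlt.neg (γ ζ φ) η, neg_neg,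
      ← h.cobracket_isAlt.neg φ η, ← h.cobracket_isAlt.neg (γ φ η) ζ]
    linear_combination -key
  · have key := h.cobracket_apply_bracket x w η ζ
    simp only [LinearMap.add_apply] at key
    simp only [jacobiator, doubleBracket_apply, map_zero, zero_sub, LinearMap.zero_apply, add_zero,
      zero_add, sub_zero, map_neg, LinearMap.neg_apply, neg_zero, sub_neg_eq_add, sub_self,
      Prod.mk_add_mk, LinearMap.add_apply, h.coadjoint_apply, neg_neg, Prod.snd_zero]
    rw [h.apply_bracket ζ, h.apply_bracket η, h.apply_coadjoint, h.apply_coadjoint]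
    simp only [← h.cobracket_isAlt.neg (aμ w η) ζ, ← h.cobracket_isAlt.neg (aμ x ζ) η,
      LinearMap.neg_apply] at key ⊢
    linear_combination key

theorem jacobiator_doubleBracket_inr_inr_inr (ξ η ζ : Dual R F) :
    jacobiator (doubleBracket μ γ ψ aμ aγ) (0, ξ) (0, η) (0, ζ) = 0 := by
  simpa [jacobiator] using h.cobracket_jacobi ξ η ζ

theorem jacobiator_doubleBracket [Projective R F] (u v w : F × Dual R F) :
    jacobiator (doubleBracket μ γ ψ aμ aγ) u v w = 0 :=
  jacobiator_prod_eq_zero _ h.jacobiator_doubleBracket_inl_inl_inl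
    h.jacobiator_doubleBracket_inl_inl_inr h.jacobiator_doubleBracket_inl_inr_inr
    h.jacobiator_doubleBracket_inr_inr_inr u v w

end IsQuasiLieBialgebra

end Double

theorem stmt_19_general {F : Type*} [AddCommGroup F] [Module ℝ F]
    (μ : F →ₗ[ℝ] F →ₗ[ℝ] F) (hμalt : ∀ x : F, μ x x = 0)
    (γ : Module.Dual ℝ F →ₗ[ℝ] Module.Dual ℝ F →ₗ[ℝ] Module.Dual ℝ F)
    (hγalt : ∀ ξ : Module.Dual ℝ F, γ ξ ξ = 0)
    (hγjac : ∀ ξ η ζ : Module.Dual ℝ F,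
      γ (γ ξ η) ζ + γ (γ η ζ) ξ + γ (γ ζ ξ) η = 0)
    (ψ : F →ₗ[ℝ] F →ₗ[ℝ] Module.Dual ℝ F)
    (hψ1 : ∀ x : F, ψ x x = 0)
    (hψ2 : ∀ x y z : F, ψ x y z = -(ψ x z y))
    (aμ : F → Module.Dual ℝ F → Module.Dual ℝ F)
    (haμ : ∀ (x : F) (ξ : Module.Dual ℝ F) (y : F), aμ x ξ y = -(ξ (μ x y)))
    (aγ : Module.Dual ℝ F → F → F)
    (haγ : ∀ (ξ η : Module.Dual ℝ F) (x : F), η (aγ ξ x) = -(γ ξ η x))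
    -- (ii): the cobracket dual to `γ` is a derivation with respect to `μ`
    (hii : ∀ (x y : F) (ξ η : Module.Dual ℝ F),
      γ ξ η (μ x y) =
        -((γ (aμ x ξ) η + γ ξ (aμ x η)) y) + (γ (aμ y ξ) η + γ ξ (aμ y η)) x)
    -- (iii): the Jacobiator of `μ` is controlled by `ψ` and `γ`
    (hiii : ∀ x y z : F,
      μ (μ x y) z + μ (μ y z) x + μ (μ z x) y =
        -(aγ (ψ y z) x + aγ (ψ z x) y + aγ (ψ x y) z))
    -- (iv): cyclic invariance condition on `ψ`
    (hiv : ∀ x y z w : F,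
      ψ (μ x y) z w + ψ (μ y z) x w + ψ (μ z x) y w =
        -(ψ y z (μ x w) + ψ z x (μ y w) + ψ x y (μ z w)))
    (M : F × Module.Dual ℝ F → F × Module.Dual ℝ F → F × Module.Dual ℝ F)
    (hM : ∀ (x y : F) (ξ η : Module.Dual ℝ F),
      M (x, ξ) (y, η) =
        (μ x y - aγ η x + aγ ξ y, ψ x y + aμ x η - aμ y ξ + γ ξ η)) :
    (∀ u v : F × Module.Dual ℝ F, M (u + v) = M u + M v) ∧
    (∀ (c : ℝ) (u : F × Module.Dual ℝ F), M (c • u) = c • M u) ∧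
    (∀ u v w : F × Module.Dual ℝ F, M u (v + w) = M u v + M u w) ∧
    (∀ (c : ℝ) (u v : F × Module.Dual ℝ F), M u (c • v) = c • M u v) ∧
    (∀ u : F × Module.Dual ℝ F, M u u = 0) ∧
    (∀ u v w : F × Module.Dual ℝ F,
      M (M u v) w + M (M v w) u + M (M w u) v = 0) ∧
    (∀ u v w : F × Module.Dual ℝ F,
      ((M u v).2 w.1 + w.2 (M u v).1) + (v.2 (M u w).1 + (M u w).2 v.1) = 0) := by
  obtain ⟨aμ, rfl⟩ : ∃ g : F →ₗ[ℝ] Dual ℝ F →ₗ[ℝ] Dual ℝ F, aμ = fun x ξ ↦ g x ξ :=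
    ⟨Dual.transpose ∘ₗ (-μ), by ext x ξ y; simp [haμ, Dual.transpose_apply]⟩
  obtain ⟨aγ, rfl⟩ := exists_linearMap₂_eq_of_dual_apply_eq_neg γ aγ haγ
  obtain rfl : M = fun u v ↦ doubleBracket μ γ ψ aμ aγ u v := by
    funext ⟨x, ξ⟩ ⟨y, η⟩
    exact hM x y ξ η
  have h : IsQuasiLieBialgebra μ γ ψ aμ aγ :=
    ⟨hμalt, hγalt, hγjac, hψ1, hψ2, haμ, haγ, hii, hiii, hiv⟩
  exact ⟨fun u v ↦ funext fun w ↦ LinearMap.map_add₂ _ u v w,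
    fun c u ↦ funext fun w ↦ LinearMap.map_smul₂ _ c u w, fun u ↦ map_add _,
    fun c u ↦ map_smul _ c, h.doubleBracket_self, h.jacobiator_doubleBracket,
    h.doubleBracket_invariant⟩

/-- Let `(F, μ, γ, ψ)` be a quasi-Lie bialgebra on a
finite-dimensional real vector space `F`, with coadjoint actions
`aμ x ξ = ad*μ_x ξ` (`⟨ad*μ_x ξ, y⟩ = −⟨ξ, μ(x,y)⟩`) and
`aγ ξ x = ad*γ_ξ x` (`⟨η, ad*γ_ξ x⟩ = −⟨γ(ξ,η), x⟩`).
The bracket `M` on `F ⊕ F*` given by `M(x,y) = μ(x,y) + ψ(x,y)`,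
`M(x,ξ) = −ad*γ_ξ x + ad*μ_x ξ = −M(ξ,x)`, `M(ξ,η) = γ(ξ,η)` is a Lie bracket
(bilinear, alternating, Jacobi) and leaves invariant the canonical scalar
product `⟨x+ξ, y+η⟩ = ⟨ξ,y⟩ + ⟨η,x⟩`. -/
theorem stmt_19 {F : Type*} [AddCommGroup F] [Module ℝ F] [FiniteDimensional ℝ F]
    (μ : F →ₗ[ℝ] F →ₗ[ℝ] F) (hμalt : ∀ x : F, μ x x = 0)
    (γ : Module.Dual ℝ F →ₗ[ℝ] Module.Dual ℝ F →ₗ[ℝ] Module.Dual ℝ F)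
    (hγalt : ∀ ξ : Module.Dual ℝ F, γ ξ ξ = 0)
    (hγjac : ∀ ξ η ζ : Module.Dual ℝ F,
      γ (γ ξ η) ζ + γ (γ η ζ) ξ + γ (γ ζ ξ) η = 0)
    (ψ : F →ₗ[ℝ] F →ₗ[ℝ] Module.Dual ℝ F)
    (hψ1 : ∀ x : F, ψ x x = 0)
    (hψ2 : ∀ x y z : F, ψ x y z = -(ψ x z y))
    (aμ : F → Module.Dual ℝ F → Module.Dual ℝ F)
    (haμ : ∀ (x : F) (ξ : Module.Dual ℝ F) (y : F), aμ x ξ y = -(ξ (μ x y)))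
    (aγ : Module.Dual ℝ F → F → F)
    (haγ : ∀ (ξ η : Module.Dual ℝ F) (x : F), η (aγ ξ x) = -(γ ξ η x))
    -- (ii): the cobracket dual to `γ` is a derivation with respect to `μ`
    (hii : ∀ (x y : F) (ξ η : Module.Dual ℝ F),
      γ ξ η (μ x y) =
        -((γ (aμ x ξ) η + γ ξ (aμ x η)) y) + (γ (aμ y ξ) η + γ ξ (aμ y η)) x)
    -- (iii): the Jacobiator of `μ` is controlled by `ψ` and `γ`
    (hiii : ∀ x y z : F,
      μ (μ x y) z + μ (μ y z) x + μ (μ z x) y =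
        -(aγ (ψ y z) x + aγ (ψ z x) y + aγ (ψ x y) z))
    -- (iv): cyclic invariance condition on `ψ`
    (hiv : ∀ x y z w : F,
      ψ (μ x y) z w + ψ (μ y z) x w + ψ (μ z x) y w =
        -(ψ y z (μ x w) + ψ z x (μ y w) + ψ x y (μ z w)))
    (M : F × Module.Dual ℝ F → F × Module.Dual ℝ F → F × Module.Dual ℝ F)
    (hM : ∀ (x y : F) (ξ η : Module.Dual ℝ F),
      M (x, ξ) (y, η) =
        (μ x y - aγ η x + aγ ξ y, ψ x y + aμ x η - aμ y ξ + γ ξ η)) :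
    (∀ u v : F × Module.Dual ℝ F, M (u + v) = M u + M v) ∧
    (∀ (c : ℝ) (u : F × Module.Dual ℝ F), M (c • u) = c • M u) ∧
    (∀ u v w : F × Module.Dual ℝ F, M u (v + w) = M u v + M u w) ∧
    (∀ (c : ℝ) (u v : F × Module.Dual ℝ F), M u (c • v) = c • M u v) ∧
    (∀ u : F × Module.Dual ℝ F, M u u = 0) ∧
    (∀ u v w : F × Module.Dual ℝ F,
      M (M u v) w + M (M v w) u + M (M w u) v = 0) ∧
    (∀ u v w : F × Module.Dual ℝ F,
      ((M u v).2 w.1 + w.2 (M u v).1) + (v.2 (M u w).1 + (M u w).2 v.1) = 0) :=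
  stmt_19_general μ hμalt γ hγalt hγjac ψ hψ1 hψ2 aμ haμ aγ haγ hii hiii hiv M hM
end
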